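/- arXiv:2208.09790 — 5 statements merged into one kernel-verified Lean document; each statement's English description precedes it below -/
import Mathlib

section
/- Let T be a natural number. For each s ∈ {1,...,T}, let Γ : X → Set U have nonempty compact values and be L_Γ-Lipschitz in the Hausdorff metric: hausdorffDist(Γ(x), Γ(x')) ≤ L_Γ · ‖x − x'‖ for all x, x'; let f_s : X → U → W_s → X satisfy ‖f_s(x,u,w) − f_s(x',u',w)‖ ≤ ‖x − x'‖ + ‖u − u'‖ for all x,x',u,u',w; let c_s ∈ ℝ^q and μ_s a probability mass function on the finite set W_s. Define v_{T+1} ≡ 0 and v_s(x) = inf_{u ∈ Γ(x)} ( c_s·u + Σ_{w ∈ W_s} μ_s(w) · v_{s+1}(f_s(x,u,w)) ). Define constants by L_{T+1} = 0 and L_s = ‖c_s‖₁ · L_Γ + L_{s+1} · (1 + L_Γ). Then for every s ∈ {1,...,T+1}, v_s is Lipschitz continuous with Lipschitz constant L_s. -/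
/-!
Each value function is the infimum over the constraint set `Γ x` of a stage cost plus an
expected continuation value. Given a minimiser `u'` of the objective at `x'`, the Hausdorff
bound supplies `u ∈ Γ x` with `‖u - u'‖ ≤ L_Γ ‖x - x'‖`, and comparing the objectives at
`(x, u)` and `(x', u')` gives the one-step Lipschitz constant `‖c‖₁ L_Γ + L' (1 + L_Γ)`
from the constant `L'` of the next value function. Backward induction from `v (T + 1) = 0`
then gives all the constants `L s`, which are nonnegative because `L_Γ` is.
-/

open Metric Finset

section Infimum

variable {X U : Type*} [PseudoMetricSpace X] [PseudoMetricSpace U]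

theorem sInf_image_sub_le_of_hausdorffDist_le {Γ : X → Set U} {g : X → U → ℝ} {x x' : X}
    {A B K : ℝ} (hne : (Γ x).Nonempty) (hne' : (Γ x').Nonempty) (hcpt : IsCompact (Γ x))
    (hcpt' : IsCompact (Γ x')) (hcont : ContinuousOn (g x) (Γ x))
    (hcont' : ContinuousOn (g x') (Γ x')) (hΓ : hausdorffDist (Γ x') (Γ x) ≤ K * dist x x')
    (hB : 0 ≤ B) (hg : ∀ u u', g x u - g x' u' ≤ A * dist x x' + B * dist u u') :
    sInf (g x '' Γ x) - sInf (g x' '' Γ x') ≤ (A + B * K) * dist x x' := by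
  obtain ⟨u', hu', hmin⟩ := (hcpt'.image_of_continuousOn hcont').sInf_mem (hne'.image _)
  obtain ⟨u, hu, hdist⟩ := hcpt.exists_infDist_eq_dist hne u'
  have hclose : dist u u' ≤ K * dist x x' := by
    rw [dist_comm, ← hdist]
    exact (infDist_le_hausdorffDist_of_mem hu' (hausdorffEDist_ne_top_of_nonempty_of_bounded
      hne' hne hcpt'.isBounded hcpt.isBounded)).trans hΓ
  have hle : sInf (g x '' Γ x) ≤ g x u := csInf_le (hcpt.bddBelow_image hcont) ⟨u, hu, rfl⟩
  calc sInf (g x '' Γ x) - sInf (g x' '' Γ x')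
      ≤ g x u - g x' u' := by rw [← hmin]; linarith
    _ ≤ A * dist x x' + B * dist u u' := hg u u'
    _ ≤ A * dist x x' + B * (K * dist x x') := by gcongr
    _ = (A + B * K) * dist x x' := by ring

theorem abs_sInf_image_sub_le_of_hausdorffDist_le {Γ : X → Set U} {g : X → U → ℝ}
    {A B K : ℝ} (hne : ∀ x, (Γ x).Nonempty) (hcpt : ∀ x, IsCompact (Γ x))
    (hΓ : ∀ x x', hausdorffDist (Γ x) (Γ x') ≤ K * dist x x') (hB : 0 ≤ B)
    (hg : ∀ x x' u u', |g x u - g x' u'| ≤ A * dist x x' + B * dist u u') (x x' : X) :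
    |sInf (g x '' Γ x) - sInf (g x' '' Γ x')| ≤ (A + B * K) * dist x x' := by
  have hcont : ∀ y, ContinuousOn (g y) (Γ y) := fun y =>
    (LipschitzWith.of_dist_le' fun u u' => by simpa [Real.dist_eq] using hg y y u u').continuous.continuousOn
  have hside : ∀ y y', sInf (g y '' Γ y) - sInf (g y' '' Γ y') ≤ (A + B * K) * dist y y' :=
    fun y y' => sInf_image_sub_le_of_hausdorffDist_le (hne y) (hne y') (hcpt y) (hcpt y')
      (hcont y) (hcont y') (hΓ y' y |>.trans_eq (by rw [dist_comm])) hB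
      fun u u' => (le_abs_self _).trans (hg y y' u u')
  rw [abs_sub_le_iff]
  exact ⟨hside x x', dist_comm x x' ▸ hside x' x⟩

end Infimum

theorem abs_sum_mul_le_sum_abs_mul_norm {ι : Type*} [Fintype ι] (c u : ι → ℝ) :
    |∑ i, c i * u i| ≤ (∑ i, |c i|) * ‖u‖ := by
  rw [Finset.sum_mul]
  refine (abs_sum_le_sum_abs _ _).trans (sum_le_sum fun i _ => ?_)
  rw [abs_mul]
  exact mul_le_mul_of_nonneg_left (norm_le_pi_norm u i) (abs_nonneg _)

theorem abs_sum_mul_sub_sum_mul_le {W : Type*} [Fintype W] {μ : W → ℝ} (hμ0 : ∀ w, 0 ≤ μ w)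
    (hμ1 : ∑ w, μ w = 1) {a b : W → ℝ} {M : ℝ} (hab : ∀ w, |a w - b w| ≤ M) :
    |∑ w, μ w * a w - ∑ w, μ w * b w| ≤ M := by
  rw [← sum_sub_distrib]
  calc |∑ w, (μ w * a w - μ w * b w)|
      ≤ ∑ w, |μ w * a w - μ w * b w| := abs_sum_le_sum_abs _ _
    _ ≤ ∑ w, μ w * M := sum_le_sum fun w _ => by
        rw [← mul_sub, abs_mul, abs_of_nonneg (hμ0 w)]
        exact mul_le_mul_of_nonneg_left (hab w) (hμ0 w)
    _ = M := by rw [← sum_mul, hμ1, one_mul]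

section Bellman

variable {X U W : Type*} [PseudoMetricSpace X] [PseudoMetricSpace U] [Fintype W]

noncomputable def bellman (Γ : X → Set U) (r : U → ℝ) (μ : W → ℝ) (f : X → U → W → X)
    (V : X → ℝ) (x : X) : ℝ :=
  sInf ((fun u => r u + ∑ w, μ w * V (f x u w)) '' Γ x)

theorem abs_bellman_sub_le {Γ : X → Set U} {r : U → ℝ} {μ : W → ℝ} {f : X → U → W → X}
    {V : X → ℝ} {C K M : ℝ} (hμ0 : ∀ w, 0 ≤ μ w) (hμ1 : ∑ w, μ w = 1)
    (hne : ∀ x, (Γ x).Nonempty) (hcpt : ∀ x, IsCompact (Γ x))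
    (hΓ : ∀ x x', hausdorffDist (Γ x) (Γ x') ≤ K * dist x x')
    (hC : 0 ≤ C) (hr : ∀ u u', |r u - r u'| ≤ C * dist u u')
    (hM : 0 ≤ M) (hV : ∀ y y', |V y - V y'| ≤ M * dist y y')
    (hf : ∀ x x' u u' w, dist (f x u w) (f x' u' w) ≤ dist x x' + dist u u') (x x' : X) :
    |bellman Γ r μ f V x - bellman Γ r μ f V x'| ≤ (C * K + M * (1 + K)) * dist x x' := by
  have hobj : ∀ y y' u u', |(r u + ∑ w, μ w * V (f y u w)) - (r u' + ∑ w, μ w * V (f y' u' w))|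
      ≤ M * dist y y' + (C + M) * dist u u' := by
    intro y y' u u'
    have hexp : |∑ w, μ w * V (f y u w) - ∑ w, μ w * V (f y' u' w)|
        ≤ M * (dist y y' + dist u u') :=
      abs_sum_mul_sub_sum_mul_le hμ0 hμ1 fun w =>
        (hV _ _).trans (mul_le_mul_of_nonneg_left (hf y y' u u' w) hM)
    calc _ = |(r u - r u') + (∑ w, μ w * V (f y u w) - ∑ w, μ w * V (f y' u' w))| := by ring_nf
      _ ≤ |r u - r u'| + |∑ w, μ w * V (f y u w) - ∑ w, μ w * V (f y' u' w)| := abs_add_le _ _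
      _ ≤ C * dist u u' + M * (dist y y' + dist u u') := add_le_add (hr u u') hexp
      _ = M * dist y y' + (C + M) * dist u u' := by ring
  have := abs_sInf_image_sub_le_of_hausdorffDist_le hne hcpt hΓ (add_nonneg hC hM) hobj x x'
  calc _ ≤ (M + (C + M) * K) * dist x x' := this
    _ = (C * K + M * (1 + K)) * dist x x' := by ring

end Bellman

/-- Lipschitz continuity of the value functions of the EV-charging dynamic program:
if `Γ` is `L_Γ`-Lipschitz in the Hausdorff metric and the transitions are jointly
nonexpansive (`‖f(x,u,w) − f(x',u',w)‖ ≤ ‖x−x'‖ + ‖u−u'‖`), then `v s` is Lipschitz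
with constant `L s` given by `L (T+1) = 0`, `L s = ‖c_s‖₁ L_Γ + L (s+1) (1 + L_Γ)`. -/
theorem stmt3 (p q T : ℕ)
    (W : ℕ → Type) [∀ s, Fintype (W s)]
    (μ : ∀ s, W s → ℝ)
    (hμ0 : ∀ s w, 0 ≤ μ s w)
    (hμ1 : ∀ s, ∑ w, μ s w = 1)
    (Γ : ℕ → (Fin p → ℝ) → Set (Fin q → ℝ))
    (hΓne : ∀ s x, (Γ s x).Nonempty)
    (hΓcpt : ∀ s x, IsCompact (Γ s x))
    (LΓ : ℝ) (hLΓ : 0 ≤ LΓ)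
    (hΓlip : ∀ s (x x' : Fin p → ℝ),
      Metric.hausdorffDist (Γ s x) (Γ s x') ≤ LΓ * ‖x - x'‖)
    (f : ∀ s, (Fin p → ℝ) → (Fin q → ℝ) → W s → (Fin p → ℝ))
    (hf : ∀ s (x x' : Fin p → ℝ) (u u' : Fin q → ℝ) w,
      ‖f s x u w - f s x' u' w‖ ≤ ‖x - x'‖ + ‖u - u'‖)
    (c : ℕ → Fin q → ℝ)
    (v : ℕ → (Fin p → ℝ) → ℝ)
    (hvT : ∀ x, v (T + 1) x = 0)
    (hv : ∀ s, 1 ≤ s → s ≤ T → ∀ x,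
      v s x = sInf ((fun u => (∑ i, c s i * u i) +
        ∑ w, μ s w * v (s + 1) (f s x u w)) '' Γ s x))
    (L : ℕ → ℝ)
    (hLT : L (T + 1) = 0)
    (hL : ∀ s, 1 ≤ s → s ≤ T → L s = (∑ i, |c s i|) * LΓ + L (s + 1) * (1 + LΓ)) :
    ∀ s, 1 ≤ s → s ≤ T + 1 → ∀ x x' : Fin p → ℝ,
      |v s x - v s x'| ≤ L s * ‖x - x'‖ := by
  simp only [← dist_eq_norm] at hΓlip hf ⊢
  suffices h : ∀ s, 1 ≤ s → s ≤ T + 1 → 0 ≤ L s ∧ ∀ x x', |v s x - v s x'| ≤ L s * dist x x' from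
    fun s hs1 hsT => (h s hs1 hsT).2
  intro s hs1 hsT
  induction hsT using Nat.decreasingInduction with
  | self => exact ⟨hLT.ge, fun x x' => by simp [hvT, hLT]⟩
  | of_succ k hk ih =>
    obtain ⟨hL0, hlip⟩ := ih (by omega)
    have hc0 : 0 ≤ ∑ i, |c k i| := by positivity
    have hrlip : ∀ u u' : Fin q → ℝ, |∑ i, c k i * u i - ∑ i, c k i * u' i|
        ≤ (∑ i, |c k i|) * dist u u' := fun u u' => by
      simpa only [dist_eq_norm, ← sum_sub_distrib, ← mul_sub, Pi.sub_apply] using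
        abs_sum_mul_le_sum_abs_mul_norm (c k) (u - u')
    rw [hL k hs1 (by omega)]
    refine ⟨by positivity, fun x x' => ?_⟩
    rw [hv k hs1 (by omega), hv k hs1 (by omega)]
    exact abs_bellman_sub_le (hμ0 k) (hμ1 k) (hΓne k) (hΓcpt k) (hΓlip k) hc0 hrlip hL0 hlip
      (hf k) x x'
end

section
/- Let Q₁ be a real a×q matrix, Q₂ a real a×p matrix, Q₃ a real b×q matrix, and Q₄ a real b×p matrix. For x ∈ ℝ^p define the polyhedral correspondence Γ(x) = { u ∈ ℝ^q | u ≥ 0, Q₁u ≤ Q₂x, Q₃u = Q₄x } (inequalities componentwise). Then there exists a constant L ≥ 0 such that for all x, x' ∈ ℝ^p with Γ(x) and Γ(x') both nonempty, the Hausdorff extended distance satisfies hausdorffEdist(Γ(x), Γ(x')) ≤ L · ‖x − x'‖. -/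
/-!
After stacking the constraints, `Γ(x) = {u | M u ≤ N x}`, so it suffices to show that
`c ↦ {u | M u ≤ c}` is Lipschitz on its domain. This is Hoffman's error bound: if `v` violates
the system `⟪aᵢ, u⟫ ≤ cᵢ` by at most `r`, its Euclidean projection `w` onto the polyhedron
satisfies `‖v - w‖ ≤ H r`. Indeed, by Farkas' lemma `v - w` lies in the cone of the rows active
at `w`, and by Carathéodory's theorem it is a combination `∑ mᵢ aᵢ` of linearly independent
ones with `mᵢ ≥ 0`; for independent rows `∑ mᵢ ≤ C ‖v - w‖` with `C` depending only on `a`, so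
`‖v - w‖² = ∑ mᵢ (⟪aᵢ, v⟫ - cᵢ) ≤ C ‖v - w‖ r`.
-/

open Finset

section ConicHull

variable {ι E : Type*}

def conicHull [AddCommMonoid E] [Module ℝ E] (a : ι → E) (t : Finset ι) : Set E :=
  {y | ∃ l : ι → ℝ, (∀ i ∈ t, 0 ≤ l i) ∧ ∑ i ∈ t, l i • a i = y}

variable [AddCommGroup E] [Module ℝ E]

lemma zero_mem_conicHull (a : ι → E) (t : Finset ι) : 0 ∈ conicHull a t :=
  ⟨0, fun _ _ => le_rfl, by simp⟩

lemma convex_conicHull (a : ι → E) (t : Finset ι) : Convex ℝ (conicHull a t) := by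
  rintro _ ⟨l, hl, rfl⟩ _ ⟨l', hl', rfl⟩ α β hα hβ -
  refine ⟨α • l + β • l', fun i hi => ?_, ?_⟩
  · simp only [Pi.add_apply, Pi.smul_apply, smul_eq_mul]
    exact add_nonneg (mul_nonneg hα (hl i hi)) (mul_nonneg hβ (hl' i hi))
  · simp [add_smul, mul_smul, sum_add_distrib, smul_sum]

lemma add_mem_conicHull [DecidableEq ι] {a : ι → E} {t : Finset ι} {y : E}
    (hy : y ∈ conicHull a t) {i : ι} (hi : i ∈ t) : y + a i ∈ conicHull a t := by
  obtain ⟨l, hl, rfl⟩ := hy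
  refine ⟨l + Pi.single i 1, fun j hj => ?_, ?_⟩
  · by_cases hji : j = i
    · simpa [hji] using add_nonneg (hl j hj) zero_le_one
    · simpa [hji] using hl j hj
  · simp [add_smul, sum_add_distrib, Pi.single_apply, hi]

variable [DecidableEq ι]

lemma conicHull_mono (a : ι → E) {s t : Finset ι} (hst : s ⊆ t) :
    conicHull a s ⊆ conicHull a t := by
  rintro y ⟨l, hl, rfl⟩
  refine ⟨fun i => if i ∈ s then l i else 0, fun i _ => ?_, ?_⟩
  · by_cases hi : i ∈ s <;> simp [hi, hl]
  · rw [← sum_subset hst fun i _ hi => by simp [hi]]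
    exact sum_congr rfl fun i hi => by simp [hi]

lemma conicHull_eq_image (a : ι → E) (s : Finset ι) :
    conicHull a s = Fintype.linearCombination ℝ (fun i : s => a i) '' {l | 0 ≤ l} := by
  ext y
  simp only [conicHull, Set.mem_ofPred_eq, Set.mem_image, Fintype.linearCombination_apply]
  constructor
  · rintro ⟨l, hl, rfl⟩
    exact ⟨fun i => l i, fun i => hl i i.2, sum_coe_sort s fun i => l i • a i⟩
  · rintro ⟨l, hl, rfl⟩
    refine ⟨fun i => if h : i ∈ s then l ⟨i, h⟩ else 0, fun i hi => by simpa [hi] using hl _, ?_⟩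
    rw [← sum_coe_sort]
    simp

/-- Moving the coefficients along a vanishing relation `g` until the first one hits zero. -/
lemma exists_mem_conicHull_erase {a : ι → E} {t : Finset ι} {y : E} (hy : y ∈ conicHull a t)
    {g : ι → ℝ} (hg : ∑ i ∈ t, g i • a i = 0) {j : ι} (hj : j ∈ t) (hgj : 0 < g j) :
    ∃ k ∈ t, y ∈ conicHull a (t.erase k) := by
  obtain ⟨l, hl, rfl⟩ := hy
  have hP : (t.filter (0 < g ·)).Nonempty := ⟨j, mem_filter.2 ⟨hj, hgj⟩⟩
  obtain ⟨k, hk, hkmin⟩ := exists_min_image _ (fun i => l i / g i) hP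
  obtain ⟨hkt, hgk⟩ := mem_filter.1 hk
  set θ := l k / g k
  have hθ : 0 ≤ θ := div_nonneg (hl k hkt) hgk.le
  have hm : ∀ i ∈ t, 0 ≤ l i - θ * g i := by
    intro i hi
    rcases lt_or_ge 0 (g i) with hgi | hgi
    · have := hkmin i (mem_filter.2 ⟨hi, hgi⟩)
      rw [le_div_iff₀ hgi] at this
      linarith
    · nlinarith [hl i hi]
  have hmk : l k - θ * g k = 0 := by simp [θ, div_mul_cancel₀ _ hgk.ne']
  refine ⟨k, hkt, fun i => l i - θ * g i, fun i hi => hm i (mem_of_mem_erase hi), ?_⟩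
  calc ∑ i ∈ t.erase k, (l i - θ * g i) • a i = ∑ i ∈ t, (l i - θ * g i) • a i := by
        rw [← add_sum_erase t _ hkt, hmk, zero_smul, zero_add]
    _ = ∑ i ∈ t, l i • a i := by
        simp only [sub_smul, mul_smul, sum_sub_distrib, ← smul_sum, hg, smul_zero, sub_zero]

/-- Carathéodory's theorem for cones. -/
theorem exists_linearIndepOn_of_mem_conicHull {a : ι → E} {t : Finset ι} {y : E}
    (hy : y ∈ conicHull a t) : ∃ s ⊆ t, LinearIndepOn ℝ a (s : Set ι) ∧ y ∈ conicHull a s := by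
  induction t using Finset.strongInduction with
  | H t ih =>
    by_cases hind : LinearIndepOn ℝ a (t : Set ι)
    · exact ⟨t, subset_rfl, hind, hy⟩
    obtain ⟨g, hg, j, hj, hgj⟩ := not_linearIndepOn_finset_iff.1 hind
    obtain ⟨k, hk, hyk⟩ : ∃ k ∈ t, y ∈ conicHull a (t.erase k) := by
      rcases hgj.lt_or_gt with hneg | hpos
      · refine exists_mem_conicHull_erase hy (g := -g) ?_ hj (by simpa using hneg)
        simp [neg_smul, sum_neg_distrib, hg]
      · exact exists_mem_conicHull_erase hy hg hj hpos
    obtain ⟨s, hs, hsind, hys⟩ := ih _ (erase_ssubset hk) hyk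
    exact ⟨s, hs.trans (erase_subset _ _), hsind, hys⟩

end ConicHull

section Normed

variable {ι E : Type*} [NormedAddCommGroup E] [NormedSpace ℝ E] {a : ι → E} {s : Finset ι}

lemma LinearIndepOn.isClosed_conicHull [DecidableEq ι] (h : LinearIndepOn ℝ a (s : Set ι)) :
    IsClosed (conicHull a s) := by
  rw [conicHull_eq_image]
  refine (LinearMap.isClosedEmbedding_of_injective ?_).isClosedMap _ isClosed_Ici
  exact LinearMap.ker_eq_bot.2 h.linearIndependent.fintypeLinearCombination_injective

theorem isClosed_conicHull (a : ι → E) (t : Finset ι) : IsClosed (conicHull a t) := by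
  classical
  have : conicHull a t = ⋃ (s : Finset ι)
      (_ : s ∈ t.powerset.filter fun s : Finset ι => LinearIndepOn ℝ a (s : Set ι)),
      conicHull a s := by
    refine subset_antisymm (fun y hy => ?_) (Set.iUnion₂_subset fun s hs => ?_)
    · obtain ⟨s, hst, hind, hys⟩ := exists_linearIndepOn_of_mem_conicHull hy
      exact Set.mem_biUnion (mem_filter.2 ⟨mem_powerset.2 hst, hind⟩) hys
    · exact conicHull_mono a (mem_powerset.1 (mem_filter.1 hs).1)
  rw [this]
  exact isClosed_biUnion_finset fun s hs => (mem_filter.1 hs).2.isClosed_conicHull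

lemma LinearIndepOn.exists_sum_abs_le (h : LinearIndepOn ℝ a (s : Set ι)) :
    ∃ C, ∀ m : ι → ℝ, ∑ i ∈ s, |m i| ≤ C * ‖∑ i ∈ s, m i • a i‖ := by
  set f := Fintype.linearCombination ℝ (fun i : s => a i)
  obtain ⟨K, -, hK⟩ := f.injective_iff_antilipschitz.1
    h.linearIndependent.fintypeLinearCombination_injective
  refine ⟨s.card * K, fun m => ?_⟩
  set l : s → ℝ := fun i => m i
  have hfl : f l = ∑ i ∈ s, m i • a i := by
    rw [Fintype.linearCombination_apply]
    exact sum_coe_sort s fun i => m i • a i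
  have hl : ‖l‖ ≤ K * ‖f l‖ := by simpa using hK.le_mul_dist l 0
  calc ∑ i ∈ s, |m i| = ∑ i : s, ‖l i‖ := (sum_coe_sort s fun i => |m i|).symm
    _ ≤ ∑ _i : s, ‖l‖ := sum_le_sum fun i _ => norm_le_pi_norm l i
    _ = s.card * ‖l‖ := by simp
    _ ≤ s.card * (K * ‖f l‖) := by gcongr
    _ = s.card * K * ‖∑ i ∈ s, m i • a i‖ := by rw [hfl, mul_assoc]

lemma exists_forall_linearIndepOn_sum_abs_le [Finite ι] (a : ι → E) :
    ∃ C, 0 ≤ C ∧ ∀ s : Finset ι, LinearIndepOn ℝ a (s : Set ι) →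
      ∀ m : ι → ℝ, ∑ i ∈ s, |m i| ≤ C * ‖∑ i ∈ s, m i • a i‖ := by
  have hev : ∀ s : Finset ι, ∀ᶠ C in Filter.atTop, LinearIndepOn ℝ a (s : Set ι) →
      ∀ m : ι → ℝ, ∑ i ∈ s, |m i| ≤ C * ‖∑ i ∈ s, m i • a i‖ := by
    intro s
    by_cases h : LinearIndepOn ℝ a (s : Set ι)
    · obtain ⟨C₀, hC₀⟩ := h.exists_sum_abs_le
      filter_upwards [Filter.eventually_ge_atTop C₀] with C hC _ m
      exact (hC₀ m).trans (by gcongr)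
    · exact Filter.Eventually.of_forall fun _ h' => absurd h' h
  obtain ⟨C, hC, hC0⟩ := ((Filter.eventually_all.2 hev).and (Filter.eventually_ge_atTop 0)).exists
  exact ⟨C, hC0, hC⟩

end Normed

section InnerProduct

open RealInnerProductSpace Filter Topology

variable {ι E : Type*} [NormedAddCommGroup E] [InnerProductSpace ℝ E] {a : ι → E}

/-- Farkas' lemma. -/
theorem mem_conicHull_of_forall_inner_le_zero [FiniteDimensional ℝ E] [DecidableEq ι]
    {t : Finset ι} {y : E}
    (h : ∀ d, (∀ i ∈ t, ⟪a i, d⟫ ≤ 0) → ⟪y, d⟫ ≤ 0) : y ∈ conicHull a t := by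
  obtain ⟨z, hz, hzmin⟩ := exists_norm_eq_iInf_of_complete_convex ⟨0, zero_mem_conicHull a t⟩
    (isClosed_conicHull a t).isComplete (convex_conicHull a t) y
  have hobtuse := (norm_eq_iInf_iff_real_inner_le_zero (convex_conicHull a t) hz).1 hzmin
  have hd : ∀ i ∈ t, ⟪a i, y - z⟫ ≤ 0 := fun i hi => by
    simpa [real_inner_comm] using hobtuse _ (add_mem_conicHull hz hi)
  have hz0 : 0 ≤ ⟪z, y - z⟫ := by
    simpa [real_inner_comm] using hobtuse 0 (zero_mem_conicHull a t)
  have : ‖y - z‖ ^ 2 ≤ 0 := by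
    rw [← real_inner_self_eq_norm_sq, inner_sub_left]
    linarith [h _ hd]
  rw [sq_nonpos_iff, norm_eq_zero, sub_eq_zero] at this
  rwa [this]

def polyhedron (a : ι → E) (c : ι → ℝ) : Set E := {u | ∀ i, ⟪a i, u⟫ ≤ c i}

lemma convex_polyhedron (a : ι → E) (c : ι → ℝ) : Convex ℝ (polyhedron a c) := by
  simp only [polyhedron, Set.ofPred_forall]
  exact convex_iInter fun i => convex_halfSpace_le (innerₗ E (a i)).isLinear _

lemma isClosed_polyhedron (a : ι → E) (c : ι → ℝ) : IsClosed (polyhedron a c) := by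
  simp only [polyhedron, Set.ofPred_forall]
  exact isClosed_iInter fun i => isClosed_le (continuous_const.inner continuous_id) continuous_const

lemma exists_add_smul_mem_polyhedron [Finite ι] {c : ι → ℝ} {w d : E} (hw : w ∈ polyhedron a c)
    (hd : ∀ i, ⟪a i, w⟫ = c i → ⟪a i, d⟫ ≤ 0) : ∃ ε : ℝ, 0 < ε ∧ w + ε • d ∈ polyhedron a c := by
  have hev : ∀ i, ∀ᶠ ε in 𝓝[>] (0 : ℝ), ⟪a i, w + ε • d⟫ ≤ c i := by
    intro i
    by_cases hact : ⟪a i, w⟫ = c i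
    · filter_upwards [self_mem_nhdsWithin] with ε (hε : 0 < ε)
      rw [inner_add_right, real_inner_smul_right, hact]
      nlinarith [hd i hact]
    · have hcont : Continuous fun ε : ℝ => ⟪a i, w + ε • d⟫ := by fun_prop
      have := (hcont.tendsto 0).eventually_lt_const (by simpa using (hw i).lt_of_ne hact)
      exact (this.filter_mono nhdsWithin_le_nhds).mono fun _ => le_of_lt
  obtain ⟨ε, hε, hpos⟩ := ((eventually_all.2 hev).and self_mem_nhdsWithin).exists
  exact ⟨ε, hpos, hε⟩

lemma mem_conicHull_active_of_forall_inner_le_zero [FiniteDimensional ℝ E] [Fintype ι]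
    [DecidableEq ι] {c : ι → ℝ} {w y : E}
    (hw : w ∈ polyhedron a c) (hy : ∀ z ∈ polyhedron a c, ⟪y, z - w⟫ ≤ 0) :
    y ∈ conicHull a {i | ⟪a i, w⟫ = c i} := by
  refine mem_conicHull_of_forall_inner_le_zero fun d hd => ?_
  obtain ⟨ε, hε, hεd⟩ := exists_add_smul_mem_polyhedron hw fun i hi => hd i (by simpa using hi)
  have := hy _ hεd
  rw [add_sub_cancel_left, real_inner_smul_right] at this
  exact nonpos_of_mul_nonpos_right this hε

theorem hoffman_error_bound [FiniteDimensional ℝ E] [Fintype ι] (a : ι → E) :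
    ∃ H, 0 ≤ H ∧ ∀ (c : ι → ℝ) (v : E) (r : ℝ), 0 ≤ r → (∀ i, ⟪a i, v⟫ - c i ≤ r) →
      (polyhedron a c).Nonempty → ∃ w ∈ polyhedron a c, ‖v - w‖ ≤ H * r := by
  classical
  obtain ⟨C, hC0, hC⟩ := exists_forall_linearIndepOn_sum_abs_le a
  refine ⟨C, hC0, fun c v r hr hres hne => ?_⟩
  obtain ⟨w, hw, hwmin⟩ := exists_norm_eq_iInf_of_complete_convex hne
    (isClosed_polyhedron a c).isComplete (convex_polyhedron a c) v
  have hnormal := (norm_eq_iInf_iff_real_inner_le_zero (convex_polyhedron a c) hw).1 hwmin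
  obtain ⟨s, hs_active, hind, m, hm, hsum⟩ :=
    exists_linearIndepOn_of_mem_conicHull (mem_conicHull_active_of_forall_inner_le_zero hw hnormal)
  have hact : ∀ i ∈ s, ⟪a i, w⟫ = c i := fun i hi => by simpa using hs_active hi
  have hsq : ‖v - w‖ ^ 2 ≤ (∑ i ∈ s, m i) * r := calc
    ‖v - w‖ ^ 2 = ∑ i ∈ s, m i * (⟪a i, v⟫ - c i) := by
      rw [← real_inner_self_eq_norm_sq]
      nth_rw 1 [← hsum]
      rw [sum_inner]
      exact sum_congr rfl fun i hi => by rw [real_inner_smul_left, inner_sub_right, hact i hi]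
    _ ≤ ∑ i ∈ s, m i * r := sum_le_sum fun i hi => mul_le_mul_of_nonneg_left (hres i) (hm i hi)
    _ = (∑ i ∈ s, m i) * r := (sum_mul ..).symm
  have hmass : ∑ i ∈ s, m i ≤ C * ‖v - w‖ := calc
    ∑ i ∈ s, m i ≤ ∑ i ∈ s, |m i| := sum_le_sum fun i _ => le_abs_self _
    _ ≤ C * ‖v - w‖ := hsum ▸ hC s hind m
  refine ⟨w, hw, ?_⟩
  rcases (norm_nonneg (v - w)).eq_or_lt with h0 | hpos
  · rw [← h0]
    positivity
  · nlinarith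

end InnerProduct

namespace Matrix

open RealInnerProductSpace

variable {m n : Type*} [Fintype m] [Fintype n]

theorem exists_dist_le_of_mulVec_le (M : Matrix m n ℝ) :
    ∃ H, 0 ≤ H ∧ ∀ c c' : m → ℝ, {u | M *ᵥ u ≤ c'}.Nonempty → ∀ u, M *ᵥ u ≤ c →
      ∃ w, M *ᵥ w ≤ c' ∧ dist u w ≤ H * dist c c' := by
  set a : m → EuclideanSpace ℝ n := fun i => WithLp.toLp 2 (M i)
  have hinner : ∀ i u, ⟪a i, WithLp.toLp 2 u⟫ = (M *ᵥ u) i := fun i u => by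
    simp [a, EuclideanSpace.inner_eq_star_dotProduct, mulVec, dotProduct_comm]
  have hpoly : ∀ c u, WithLp.toLp 2 u ∈ polyhedron a c ↔ M *ᵥ u ≤ c := fun c u => by
    simp [polyhedron, hinner, Pi.le_def]
  obtain ⟨H, hH, hHoffman⟩ := hoffman_error_bound a
  refine ⟨H, hH, fun c c' ⟨u₀, hu₀⟩ u hu => ?_⟩
  have hres : ∀ i, ⟪a i, WithLp.toLp 2 u⟫ - c' i ≤ dist c c' := fun i => calc
    ⟪a i, WithLp.toLp 2 u⟫ - c' i ≤ c i - c' i := by rw [hinner]; linarith [hu i]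
    _ ≤ dist (c i) (c' i) := (Real.dist_eq _ _).symm ▸ le_abs_self _
    _ ≤ dist c c' := dist_le_pi_dist c c' i
  obtain ⟨w, hw, hdist⟩ :=
    hHoffman c' _ _ dist_nonneg hres ⟨WithLp.toLp 2 u₀, (hpoly _ _).2 hu₀⟩
  refine ⟨w.ofLp, (hpoly _ _).1 hw, ?_⟩
  calc dist u w.ofLp ≤ 1 * dist (WithLp.toLp 2 u) w :=
        (PiLp.lipschitzWith_ofLp 2 _).dist_le_mul (WithLp.toLp 2 u) w
    _ ≤ H * dist c c' := by rwa [one_mul, dist_eq_norm]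

theorem exists_hausdorffEDist_setOf_mulVec_le_le (M : Matrix m n ℝ) :
    ∃ H, 0 ≤ H ∧ ∀ c c' : m → ℝ, {u | M *ᵥ u ≤ c}.Nonempty → {u | M *ᵥ u ≤ c'}.Nonempty →
      Metric.hausdorffEDist {u | M *ᵥ u ≤ c} {u | M *ᵥ u ≤ c'} ≤
        ENNReal.ofReal (H * dist c c') := by
  obtain ⟨H, hH, hdist⟩ := M.exists_dist_le_of_mulVec_le
  refine ⟨H, hH, fun c c' hc hc' => Metric.hausdorffEDist_le_of_mem_edist ?_ ?_⟩
  · intro u hu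
    obtain ⟨w, hw, huw⟩ := hdist c c' hc' u hu
    exact ⟨w, hw, edist_dist u w ▸ ENNReal.ofReal_le_ofReal huw⟩
  · intro u hu
    obtain ⟨w, hw, huw⟩ := hdist c' c hc u hu
    exact ⟨w, hw, edist_dist u w ▸ ENNReal.ofReal_le_ofReal (dist_comm c c' ▸ huw)⟩

variable {k l r : Type*} [Fintype k] [DecidableEq n]

lemma setOf_nonneg_mulVec_le_mulVec_eq (Q₁ : Matrix l n ℝ) (Q₂ : Matrix l k ℝ)
    (Q₃ : Matrix r n ℝ) (Q₄ : Matrix r k ℝ) (x : k → ℝ) :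
    {u | 0 ≤ u ∧ Q₁ *ᵥ u ≤ Q₂ *ᵥ x ∧ Q₃ *ᵥ u = Q₄ *ᵥ x} =
      {u | fromRows (fromRows (-1) Q₁) (fromRows Q₃ (-Q₃)) *ᵥ u ≤
        fromRows (fromRows (0 : Matrix n k ℝ) Q₂) (fromRows Q₄ (-Q₄)) *ᵥ x} := by
  ext u
  simp only [Set.mem_ofPred_eq, fromRows_mulVec, Sum.elim_le_elim_iff, neg_mulVec, one_mulVec,
    zero_mulVec, neg_nonpos, neg_le_neg_iff, le_antisymm_iff]
  tauto

end Matrix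

open Matrix

/-- Lipschitz continuity (in Hausdorff distance) of the polyhedral correspondence
`Γ(x) = {u | u ≥ 0, Q₁u ≤ Q₂x, Q₃u = Q₄x}` (Walkup–Wets/Hoffman-type bound): there
is a constant `L ≥ 0` with `hausdorffEdist (Γ x) (Γ x') ≤ L‖x − x'‖` whenever both
sets are nonempty. -/
theorem stmt5 (p q a b : ℕ)
    (Q1 : Matrix (Fin a) (Fin q) ℝ) (Q2 : Matrix (Fin a) (Fin p) ℝ)
    (Q3 : Matrix (Fin b) (Fin q) ℝ) (Q4 : Matrix (Fin b) (Fin p) ℝ) :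
    ∃ L : ℝ, 0 ≤ L ∧ ∀ x x' : Fin p → ℝ,
      ({u : Fin q → ℝ | 0 ≤ u ∧ Q1.mulVec u ≤ Q2.mulVec x ∧
          Q3.mulVec u = Q4.mulVec x}).Nonempty →
      ({u : Fin q → ℝ | 0 ≤ u ∧ Q1.mulVec u ≤ Q2.mulVec x' ∧
          Q3.mulVec u = Q4.mulVec x'}).Nonempty →
      EMetric.hausdorffEdist
          {u : Fin q → ℝ | 0 ≤ u ∧ Q1.mulVec u ≤ Q2.mulVec x ∧
            Q3.mulVec u = Q4.mulVec x}
          {u : Fin q → ℝ | 0 ≤ u ∧ Q1.mulVec u ≤ Q2.mulVec x' ∧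
            Q3.mulVec u = Q4.mulVec x'}
        ≤ ENNReal.ofReal (L * ‖x - x'‖) := by
  obtain ⟨H, hH, hHausdorff⟩ := exists_hausdorffEDist_setOf_mulVec_le_le
    (fromRows (fromRows (-1 : Matrix (Fin q) (Fin q) ℝ) Q1) (fromRows Q3 (-Q3)))
  set N := fromRows (fromRows (0 : Matrix (Fin q) (Fin p) ℝ) Q2) (fromRows Q4 (-Q4))
  set f := LinearMap.toContinuousLinearMap N.mulVecLin
  refine ⟨H * ‖f‖, by positivity, fun x x' hx hx' => ?_⟩
  simp only [setOf_nonneg_mulVec_le_mulVec_eq] at hx hx' ⊢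
  calc _ ≤ ENNReal.ofReal (H * dist (N *ᵥ x) (N *ᵥ x')) := hHausdorff _ _ hx hx'
    _ ≤ ENNReal.ofReal (H * ‖f‖ * ‖x - x'‖) := by
      rw [mul_assoc, ← dist_eq_norm]
      gcongr
      exact f.lipschitz.dist_le_mul x x'
end

section
/- Let (D, dist) be a compact metric space, (W, 𝒲, μ) a probability space, and ξ : D × W → ℝ a function such that w ↦ ξ(p,w) is measurable for each p, |ξ(p,w)| ≤ C for all (p,w), and |ξ(p,w) − ξ(p',w)| ≤ L · dist(p,p') for all p, p' and all w. Let (W_i)_{i≥1} be a sequence of independent, identically distributed W-valued random variables with common distribution μ. Then for every ε > 0, the probability P( sup_{p ∈ D} | (1/k) Σ_{i=1}^k ξ(p, W_i) − ∫ ξ(p, w) dμ(w) | ≥ ε ) tends to 0 as k → ∞. -/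
/-!
A finite `η`-net of the family `ξ` in the uniform norm reduces the supremum over `p` to a maximum
over finitely many `p`: the deviation `|(1/k) Σ_{i<k} f(W_i) − ∫ f dμ|` moves by at most `2η`
when `f` moves by at most `η` uniformly. For each of the finitely many net points the weak law of
large numbers (a consequence of the strong law) applies, and a union bound finishes the proof.
Compactness together with the uniform Lipschitz bound provides the net.

The event under `P` need not be measurable: `P` acts on it as an outer measure, and monotonicity
and the union bound are all that is used.
-/

open MeasureTheory Filter ProbabilityTheory

theorem setOf_le_iSup_subset_biUnion {ι Ω : Type*} (X : ι → Ω → ℝ) (F : Finset ι) {a b η : ℝ}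
    (hF : ∀ p, ∃ q ∈ F, ∀ ω, X p ω ≤ X q ω + η) (h0 : 0 ≤ a + η) (hab : a + η < b) :
    {ω | b ≤ ⨆ p, X p ω} ⊆ ⋃ q ∈ F, {ω | a ≤ X q ω} := by
  intro ω hω
  by_contra hnot
  simp only [Set.mem_iUnion, Set.mem_ofPred_eq, not_exists, not_le] at hnot
  have hsup : ⨆ p, X p ω ≤ a + η := Real.iSup_le (fun p => by
    obtain ⟨q, hq, hpq⟩ := hF p
    linarith [hpq ω, hnot q hq]) h0
  exact absurd (hω.trans hsup) (not_le.2 hab)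

theorem exists_finset_forall_abs_sub_le_of_lipschitz {D W : Type*} [PseudoMetricSpace D]
    [CompactSpace D] (ξ : D → W → ℝ) {L : ℝ}
    (hlip : ∀ p p' w, |ξ p w - ξ p' w| ≤ L * dist p p') {η : ℝ} (hη : 0 < η) :
    ∃ F : Finset D, ∀ p, ∃ q ∈ F, ∀ w, |ξ p w - ξ q w| ≤ η := by
  set δ := η / (|L| + 1)
  have hδ : 0 < δ := by positivity
  obtain ⟨F, -, hF⟩ := isCompact_univ.elim_nhds_subcover (fun q : D => Metric.ball q δ)
    fun q _ => Metric.ball_mem_nhds q hδ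
  refine ⟨F, fun p => ?_⟩
  obtain ⟨q, hq, hpq⟩ := Set.mem_iUnion₂.1 (hF (Set.mem_univ p))
  refine ⟨q, hq, fun w => ?_⟩
  calc |ξ p w - ξ q w| ≤ L * dist p q := hlip p q w
    _ ≤ |L| * δ := mul_le_mul (le_abs_self L) (Metric.mem_ball.1 hpq).le dist_nonneg
        (abs_nonneg L)
    _ ≤ η := by
      rw [mul_div_assoc', div_le_iff₀ (by positivity)]
      nlinarith [abs_nonneg L]

section SampleMean

variable {W Ω : Type*} [MeasurableSpace W] {mΩ : MeasurableSpace Ω}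

noncomputable def sampleMeanDeviation (μ : Measure W) (Wi : ℕ → Ω → W) (f : W → ℝ) (k : ℕ)
    (ω : Ω) : ℝ :=
  |(1 / (k : ℝ)) * (∑ i ∈ Finset.range k, f (Wi i ω)) - ∫ w, f w ∂μ|

theorem tendsto_measure_le_sampleMeanDeviation (P : Measure Ω) [IsProbabilityMeasure P]
    (μ : Measure W) {f : W → ℝ} (hf : Measurable f) (hfμ : Integrable f μ)
    {Wi : ℕ → Ω → W} (hWmeas : ∀ i, Measurable (Wi i)) (hindep : iIndepFun Wi P)
    (hdist : ∀ i, P.map (Wi i) = μ) {ε : ℝ} (hε : 0 < ε) :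
    Tendsto (fun k => P {ω | ε ≤ sampleMeanDeviation μ Wi f k ω}) atTop (nhds 0) := by
  set X : ℕ → Ω → ℝ := fun i => f ∘ Wi i
  have hXmeas i : Measurable (X i) := hf.comp (hWmeas i)
  have hXmap i : P.map (X i) = μ.map f := by
    rw [← Measure.map_map hf (hWmeas i), hdist i]
  have hint : Integrable (X 0) P := by
    rw [← integrable_map_measure hf.aestronglyMeasurable (hWmeas 0).aemeasurable, hdist 0]
    exact hfμ
  have hident i : IdentDistrib (X i) (X 0) P P :=
    ⟨(hXmeas i).aemeasurable, (hXmeas 0).aemeasurable, by rw [hXmap, hXmap]⟩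
  have hpair : Pairwise (Function.onFun (IndepFun · · P) X) := fun i j hij =>
    (hindep.comp (fun _ => f) (fun _ => hf)).indepFun hij
  have hmean : ∫ ω, X 0 ω ∂P = ∫ w, f w ∂μ := by
    rw [← hdist 0, integral_map (hWmeas 0).aemeasurable hf.aestronglyMeasurable]
    rfl
  have hconv : TendstoInMeasure P (fun n ω => (∑ i ∈ Finset.range n, X i ω) / n) atTop
      (fun _ => ∫ w, f w ∂μ) := by
    refine tendstoInMeasure_of_tendsto_ae (fun n => (Finset.measurable_sum _
      fun i _ => hXmeas i).div_const _ |>.aestronglyMeasurable) ?_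
    rw [← hmean]
    exact strong_law_ae_real X hint hpair hident
  refine (hconv (ENNReal.ofReal ε) (ENNReal.ofReal_pos.2 hε)).congr fun k => ?_
  congr 1
  ext ω
  rw [Set.mem_ofPred_eq, edist_dist, ENNReal.ofReal_le_ofReal_iff dist_nonneg]
  simp only [Set.mem_ofPred_eq, Real.dist_eq, one_div, inv_mul_eq_div, sampleMeanDeviation, X,
    Function.comp_apply]

theorem abs_sampleMeanDeviation_sub_le (μ : Measure W) [IsProbabilityMeasure μ]
    (Wi : ℕ → Ω → W) {f g : W → ℝ} (hf : Integrable f μ) (hg : Integrable g μ) {K : ℝ}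
    (hK : 0 ≤ K) (hfg : ∀ w, |f w - g w| ≤ K) (k : ℕ) (ω : Ω) :
    |sampleMeanDeviation μ Wi f k ω - sampleMeanDeviation μ Wi g k ω| ≤ 2 * K := by
  set A := (1 / (k : ℝ)) * (∑ i ∈ Finset.range k, f (Wi i ω))
  set B := (1 / (k : ℝ)) * (∑ i ∈ Finset.range k, g (Wi i ω))
  have hmean : |A - B| ≤ K := by
    rw [← mul_sub, ← Finset.sum_sub_distrib, abs_mul, abs_of_nonneg (by positivity),
      one_div_mul_eq_div]
    refine div_le_of_le_mul₀ k.cast_nonneg hK ?_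
    calc |∑ i ∈ Finset.range k, (f (Wi i ω) - g (Wi i ω))|
        ≤ ∑ i ∈ Finset.range k, |f (Wi i ω) - g (Wi i ω)| := Finset.abs_sum_le_sum_abs _ _
      _ ≤ ∑ _i ∈ Finset.range k, K := Finset.sum_le_sum fun i _ => hfg _
      _ = K * k := by simp [mul_comm]
  have hintegral : |∫ w, f w ∂μ - ∫ w, g w ∂μ| ≤ K := by
    rw [← integral_sub hf hg]
    simpa using norm_integral_le_of_norm_le_const (μ := μ) (f := fun w => f w - g w)
      (ae_of_all _ hfg)
  calc _ ≤ |(A - ∫ w, f w ∂μ) - (B - ∫ w, g w ∂μ)| := abs_abs_sub_abs_le_abs_sub _ _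
    _ = |(A - B) - (∫ w, f w ∂μ - ∫ w, g w ∂μ)| := by ring_nf
    _ ≤ |A - B| + |∫ w, f w ∂μ - ∫ w, g w ∂μ| := abs_sub _ _
    _ ≤ 2 * K := by linarith

theorem tendsto_measure_le_iSup_sampleMeanDeviation {D : Type*} (P : Measure Ω)
    [IsProbabilityMeasure P] (μ : Measure W) [IsProbabilityMeasure μ] (ξ : D → W → ℝ)
    (hmeas : ∀ p, Measurable (ξ p)) (hint : ∀ p, Integrable (ξ p) μ)
    (hnet : ∀ η > 0, ∃ F : Finset D, ∀ p, ∃ q ∈ F, ∀ w, |ξ p w - ξ q w| ≤ η)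
    {Wi : ℕ → Ω → W} (hWmeas : ∀ i, Measurable (Wi i)) (hindep : iIndepFun Wi P)
    (hdist : ∀ i, P.map (Wi i) = μ) {ε : ℝ} (hε : 0 < ε) :
    Tendsto (fun k => P {ω | ε ≤ ⨆ p, sampleMeanDeviation μ Wi (ξ p) k ω}) atTop (nhds 0) := by
  obtain ⟨F, hF⟩ := hnet (ε / 8) (by positivity)
  have hcover k : {ω | ε ≤ ⨆ p, sampleMeanDeviation μ Wi (ξ p) k ω} ⊆
      ⋃ q ∈ F, {ω | ε / 2 ≤ sampleMeanDeviation μ Wi (ξ q) k ω} := by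
    refine setOf_le_iSup_subset_biUnion _ F (η := ε / 4) (fun p => ?_) (by positivity)
      (by linarith)
    obtain ⟨q, hq, hpq⟩ := hF p
    refine ⟨q, hq, fun ω => ?_⟩
    have := abs_sampleMeanDeviation_sub_le μ Wi (hint p) (hint q) (by positivity) hpq k ω
    linarith [(abs_sub_le_iff.1 this).1]
  have hsum : Tendsto (fun k => ∑ q ∈ F, P {ω | ε / 2 ≤ sampleMeanDeviation μ Wi (ξ q) k ω})
      atTop (nhds 0) := by
    simpa using tendsto_finsetSum F fun q _ => tendsto_measure_le_sampleMeanDeviation P μ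
      (hmeas q) (hint q) hWmeas hindep hdist (half_pos hε)
  exact tendsto_of_tendsto_of_tendsto_of_le_of_le tendsto_const_nhds hsum (fun _ => zero_le)
    fun k => (measure_mono (hcover k)).trans (measure_biUnion_finset_le F _)

end SampleMean

/-- Uniform law of large numbers over a compact-indexed, uniformly bounded, uniformly
Lipschitz family: if `(W_i)` are i.i.d. with distribution `μ` then
`P(sup_{p ∈ D} |(1/k) Σ_{i<k} ξ(p, W_i) − ∫ ξ(p,·) dμ| ≥ ε) → 0` as `k → ∞`. -/
theorem stmt8 {D W Ω : Type*} [MetricSpace D] [CompactSpace D]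
    [MeasurableSpace W]
    {mΩ : MeasurableSpace Ω} (P : Measure Ω) [IsProbabilityMeasure P]
    (μ : Measure W) [IsProbabilityMeasure μ]
    (ξ : D → W → ℝ) (C L : ℝ)
    (hmeas : ∀ p, Measurable (ξ p))
    (hbdd : ∀ p w, |ξ p w| ≤ C)
    (hlip : ∀ p p' w, |ξ p w - ξ p' w| ≤ L * dist p p')
    (Wi : ℕ → Ω → W)
    (hWmeas : ∀ i, Measurable (Wi i))
    (hindep : ProbabilityTheory.iIndepFun Wi P)
    (hdist : ∀ i, Measure.map (Wi i) P = μ) :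
    ∀ ε > (0 : ℝ), Tendsto (fun k : ℕ =>
        P {ω | ε ≤ ⨆ p : D,
          |(1 / (k : ℝ)) * (∑ i ∈ Finset.range k, ξ p (Wi i ω)) - ∫ w, ξ p w ∂μ|})
      atTop (nhds 0) := fun _ hε =>
  tendsto_measure_le_iSup_sampleMeanDeviation P μ ξ hmeas
    (fun p => (integrable_const C).mono' (hmeas p).aestronglyMeasurable (ae_of_all _ (hbdd p)))
    (fun _ hη => exists_finset_forall_abs_sub_le_of_lipschitz ξ hlip hη) hWmeas hindep hdist hε
end

section
/- Let X be a compact metric space, U = (Fin q → ℝ), Γ : X → Set U an L_Γ-Lipschitz (in Hausdorff metric) correspondence with nonempty compact values contained in a fixed compact set, c ∈ ℝ^q, f : X × U × W → X' a map satisfying ‖f(x,u,w) − f(x',u',w)‖ ≤ ‖x−x'‖_∞ + ‖u−u'‖_∞ for all w, μ a probability measure on W, and v : X' → ℝ bounded and Lipschitz. Let (W_i)_{i≥1} be i.i.d. W-valued random variables with distribution μ, and define the random functions Ĥᵏ(v)(x) = inf_{u ∈ Γ(x)} ( c·u + (1/k) Σ_{i=1}^k v(f(x,u,W_i)) ) and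 H(v)(x) = inf_{u ∈ Γ(x)} ( c·u + ∫ v(f(x,u,w)) dμ(w) ). Then for every ε > 0, P( sup_{x ∈ X} |Ĥᵏ(v)(x) − H(v)(x)| ≥ ε ) → 0 as k → ∞. -/
open MeasureTheory Filter ProbabilityTheory Topology NNReal

/-!
For a fixed control `(x, u)` the empirical mean of `w ↦ v (f x u w)` converges in probability to
its integral by the strong law of large numbers. The sampling error, empirical mean minus
integral, is Lipschitz in `(x, u)` uniformly in the sample, so on the compact set `X × K` it is
controlled by its values on a finite net, and a union bound makes the convergence uniform.
Infima over `Γ x` of two functions differ by at most the uniform distance between them, so the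
uniform bound passes to the Bellman operators.
-/

theorem abs_sInf_image_sub_sInf_image_le {α : Type*} {S : Set α} {g h : α → ℝ} {t : ℝ}
    (ht : 0 ≤ t) (hgh : ∀ u ∈ S, |g u - h u| ≤ t) :
    |sInf (g '' S) - sInf (h '' S)| ≤ t := by
  rcases S.eq_empty_or_nonempty with rfl | hS
  · simpa using ht
  have one_side : ∀ g' h' : α → ℝ, (∀ u ∈ S, g' u - h' u ≤ t) → BddBelow (g' '' S) →
      BddBelow (h' '' S) ∧ sInf (g' '' S) - t ≤ sInf (h' '' S) := by
    intro g' h' hgh' hg'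
    have lower : ∀ b ∈ h' '' S, sInf (g' '' S) - t ≤ b := by
      rintro _ ⟨u, hu, rfl⟩
      linarith [csInf_le hg' ⟨u, hu, rfl⟩, hgh' u hu]
    exact ⟨⟨_, lower⟩, le_csInf (hS.image h') lower⟩
  have hgh' : ∀ u ∈ S, g u - h u ≤ t := fun u hu => (abs_le.1 (hgh u hu)).2
  have hhg' : ∀ u ∈ S, h u - g u ≤ t := fun u hu => by linarith [(abs_le.1 (hgh u hu)).1]
  by_cases hg : BddBelow (g '' S)
  · have h₁ := one_side g h hgh' hg
    have h₂ := one_side h g hhg' h₁.1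
    rw [abs_sub_le_iff]
    constructor <;> linarith
  · have hh : ¬BddBelow (h '' S) := fun hh => hg (one_side h g hhg' hh).1
    rw [Real.sInf_of_not_bddBelow hg, Real.sInf_of_not_bddBelow hh, sub_self, abs_zero]
    exact ht

section SampleMean

variable {W : Type*}

/-- Equal to `0` for `k = 0`, since `1 / 0 = 0` in `ℝ`. -/
noncomputable def sampleMean (φ : W → ℝ) (s : ℕ → W) (k : ℕ) : ℝ :=
  (1 / (k : ℝ)) * ∑ i ∈ Finset.range k, φ (s i)

theorem abs_sampleMean_sub_sampleMean_le {F G : W → ℝ} {C : ℝ} (hFG : ∀ w, |F w - G w| ≤ C)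
    (s : ℕ → W) (k : ℕ) : |sampleMean F s k - sampleMean G s k| ≤ C := by
  unfold sampleMean
  rcases k.eq_zero_or_pos with rfl | hk
  · simpa using (abs_nonneg _).trans (hFG (s 0))
  rw [← mul_sub, ← Finset.sum_sub_distrib, abs_mul, abs_of_pos (by positivity)]
  calc 1 / (k : ℝ) * |∑ i ∈ Finset.range k, (F (s i) - G (s i))|
      ≤ 1 / (k : ℝ) * ∑ _i ∈ Finset.range k, C := by
        gcongr
        exact (Finset.abs_sum_le_sum_abs _ _).trans (Finset.sum_le_sum fun i _ => hFG (s i))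
    _ = C := by field_simp; simp

variable [MeasurableSpace W] {Ω : Type*} {mΩ : MeasurableSpace Ω} {P : Measure Ω}
  {μ : Measure W}

theorem abs_integral_sub_integral_le [IsProbabilityMeasure μ] {F G : W → ℝ}
    (hF : Integrable F μ) (hG : Integrable G μ) {C : ℝ} (hFG : ∀ w, |F w - G w| ≤ C) :
    |∫ w, F w ∂μ - ∫ w, G w ∂μ| ≤ C := by
  rw [← integral_sub hF hG, ← Real.norm_eq_abs]
  simpa using norm_integral_le_of_norm_le_const (μ := μ) (f := fun w => F w - G w)
    (ae_of_all _ fun w => (hFG w).trans_eq' (Real.norm_eq_abs _))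

theorem abs_sampleError_sub_sampleError_le [IsProbabilityMeasure μ] {F G : W → ℝ}
    (hF : Integrable F μ) (hG : Integrable G μ) {C : ℝ} (hFG : ∀ w, |F w - G w| ≤ C)
    (s : ℕ → W) (k : ℕ) :
    |(sampleMean F s k - ∫ w, F w ∂μ) - (sampleMean G s k - ∫ w, G w ∂μ)| ≤ 2 * C := by
  have hmean := abs_sampleMean_sub_sampleMean_le hFG s k
  have hint := abs_integral_sub_integral_le hF hG hFG
  calc _ = |(sampleMean F s k - sampleMean G s k) - (∫ w, F w ∂μ - ∫ w, G w ∂μ)| := by ring_nf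
    _ ≤ _ := (abs_sub _ _).trans (by linarith)

theorem tendsto_measure_abs_sampleMean_sub_integral_ge [IsFiniteMeasure P] {φ : W → ℝ}
    (hφ : Measurable φ) (hφμ : Integrable φ μ) {Wi : ℕ → Ω → W} (hWi : ∀ i, Measurable (Wi i))
    (hindep : Pairwise fun i j => Wi i ⟂ᵢ[P] Wi j) (hdist : ∀ i, P.map (Wi i) = μ)
    {ε : ℝ} (hε : 0 < ε) :
    Tendsto (fun k : ℕ => P {ω | ε ≤ |sampleMean φ (Wi · ω) k - ∫ w, φ w ∂μ|}) atTop (𝓝 0) := by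
  have hY : ∀ i, Measurable (φ ∘ Wi i) := fun i => hφ.comp (hWi i)
  have hident : ∀ i, IdentDistrib (φ ∘ Wi i) (φ ∘ Wi 0) P P := fun i =>
    IdentDistrib.comp ⟨(hWi i).aemeasurable, (hWi 0).aemeasurable, by rw [hdist, hdist]⟩ hφ
  have hint : Integrable (φ ∘ Wi 0) P := (hdist 0 ▸ hφμ).comp_measurable (hWi 0)
  have hmean : ∫ ω, (φ ∘ Wi 0) ω ∂P = ∫ w, φ w ∂μ := by
    rw [← hdist 0, integral_map (hWi 0).aemeasurable hφ.aestronglyMeasurable]; rfl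
  have hslln := strong_law_ae_real (fun i => φ ∘ Wi i) hint
    (fun i j hij => (hindep hij).comp hφ hφ) hident
  rw [hmean] at hslln
  have hconv := tendstoInMeasure_iff_dist.1 (tendstoInMeasure_of_tendsto_ae (fun k =>
    ((Finset.measurable_sum _ fun i _ => hY i).div_const _).aestronglyMeasurable) hslln) ε hε
  simpa [sampleMean, Real.dist_eq, div_eq_inv_mul] using hconv

end SampleMean

theorem tendsto_measure_exists_abs_sampleMean_sub_integral_ge {W Ω Z : Type*} [MeasurableSpace W]
    {mΩ : MeasurableSpace Ω} {P : Measure Ω} [IsFiniteMeasure P] {μ : Measure W}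
    [IsProbabilityMeasure μ] [PseudoMetricSpace Z] {D : Set Z} (hD : TotallyBounded D)
    {g : Z → W → ℝ} (hg : ∀ z, Measurable (g z)) (hgμ : ∀ z, Integrable (g z) μ)
    {L : ℝ≥0} (hg_lip : ∀ w, LipschitzWith L fun z => g z w)
    {Wi : ℕ → Ω → W} (hWi : ∀ i, Measurable (Wi i))
    (hindep : Pairwise fun i j => Wi i ⟂ᵢ[P] Wi j) (hdist : ∀ i, P.map (Wi i) = μ)
    {ε : ℝ} (hε : 0 < ε) :
    Tendsto (fun k : ℕ => P {ω | ∃ z ∈ D, ε ≤ |sampleMean (g z) (Wi · ω) k - ∫ w, g z w ∂μ|})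
      atTop (𝓝 0) := by
  set δ : ℝ := ε / (4 * (L + 1))
  have hLδ : 2 * (L * δ) ≤ ε / 2 := by
    have : (L : ℝ) * δ ≤ (L + 1) * δ := by gcongr; linarith
    have : (L + 1) * δ = ε / 4 := by unfold δ; field_simp
    linarith
  obtain ⟨t, htfin, hcov⟩ := Metric.totallyBounded_iff.1 hD δ (by positivity)
  lift t to Finset Z using htfin
  have hsub : ∀ k : ℕ, {ω | ∃ z ∈ D, ε ≤ |sampleMean (g z) (Wi · ω) k - ∫ w, g z w ∂μ|} ⊆
      ⋃ p ∈ t, {ω | ε / 2 ≤ |sampleMean (g p) (Wi · ω) k - ∫ w, g p w ∂μ|} := by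
    rintro k ω ⟨z, hz, hεz⟩
    obtain ⟨p, hp, hzp⟩ := Set.mem_iUnion₂.1 (hcov hz)
    have hclose := abs_sampleError_sub_sampleError_le (hgμ z) (hgμ p) (C := L * δ)
      (fun w => ((hg_lip w).dist_le_mul z p).trans (by gcongr; exact (Metric.mem_ball.1 hzp).le))
      (Wi · ω) k
    refine Set.mem_biUnion hp (show ε / 2 ≤ _ from ?_)
    linarith [abs_sub_abs_le_abs_sub (sampleMean (g z) (Wi · ω) k - ∫ w, g z w ∂μ)
      (sampleMean (g p) (Wi · ω) k - ∫ w, g p w ∂μ)]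
  have hsum := tendsto_finsetSum t fun p _ =>
    tendsto_measure_abs_sampleMean_sub_integral_ge (hg p) (hgμ p) hWi hindep hdist (half_pos hε)
  rw [Finset.sum_const_zero] at hsum
  exact tendsto_of_tendsto_of_tendsto_of_le_of_le tendsto_const_nhds hsum (fun _ => zero_le)
    fun k => (measure_mono (hsub k)).trans (measure_biUnion_finset_le _ _)

theorem stmt9_general {X X' W Ω : Type*} [MetricSpace X] [CompactSpace X] [MetricSpace X']
    [MeasurableSpace X'] [BorelSpace X'] [MeasurableSpace W]
    {mΩ : MeasurableSpace Ω} (P : Measure Ω) [IsProbabilityMeasure P]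
    (μ : Measure W) [IsProbabilityMeasure μ]
    (q : ℕ)
    (Γ : X → Set (Fin q → ℝ))
    (K : Set (Fin q → ℝ)) (hK : IsCompact K) (hΓK : ∀ x, Γ x ⊆ K)
    (c : Fin q → ℝ)
    (f : X → (Fin q → ℝ) → W → X')
    (hf : ∀ (x x' : X) (u u' : Fin q → ℝ) (w : W),
      dist (f x u w) (f x' u' w) ≤ dist x x' + ‖u - u'‖)
    (hfmeas : ∀ x u, Measurable fun w => f x u w)
    (v : X' → ℝ) (Mv Lv : ℝ)
    (hvb : ∀ y, |v y| ≤ Mv)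
    (hvlip : ∀ y y', |v y - v y'| ≤ Lv * dist y y')
    (Wi : ℕ → Ω → W)
    (hWmeas : ∀ i, Measurable (Wi i))
    (hindep : ProbabilityTheory.iIndepFun Wi P)
    (hdist : ∀ i, Measure.map (Wi i) P = μ) :
    ∀ ε > (0 : ℝ), Tendsto (fun k : ℕ =>
        P {ω | ε ≤ ⨆ x : X,
          |sInf ((fun u => (∑ i, c i * u i) +
              (1 / (k : ℝ)) * ∑ i ∈ Finset.range k, v (f x u (Wi i ω))) '' Γ x) -
            sInf ((fun u => (∑ i, c i * u i) + ∫ w, v (f x u w) ∂μ) '' Γ x)|})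
      atTop (nhds 0) := by
  intro ε hε
  have hv_lip : LipschitzWith (Real.toNNReal Lv) v := LipschitzWith.of_dist_le_mul fun y y' =>
    (hvlip y y').trans (by gcongr; exact Real.le_coe_toNNReal Lv)
  have hf_lip (w : W) : LipschitzWith 2 fun z : X × (Fin q → ℝ) => f z.1 z.2 w :=
    LipschitzWith.of_dist_le_mul fun z z' => by
      have hx : dist z.1 z'.1 ≤ dist z z' := by rw [Prod.dist_eq]; exact le_max_left _ _
      have hu : ‖z.2 - z'.2‖ ≤ dist z z' := by
        rw [← dist_eq_norm, Prod.dist_eq]; exact le_max_right _ _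
      push_cast
      linarith [hf z.1 z'.1 z.2 z'.2 w]
  have hg (z : X × (Fin q → ℝ)) : Measurable fun w => v (f z.1 z.2 w) :=
    hv_lip.continuous.measurable.comp (hfmeas z.1 z.2)
  have hgμ (z : X × (Fin q → ℝ)) : Integrable (fun w => v (f z.1 z.2 w)) μ :=
    .of_bound (hg z).aestronglyMeasurable Mv
      (ae_of_all _ fun w => (hvb _).trans_eq' (Real.norm_eq_abs _))
  have hunif := tendsto_measure_exists_abs_sampleMean_sub_integral_ge
    (isCompact_univ.prod hK).totallyBounded hg hgμ (fun w => hv_lip.comp (hf_lip w)) hWmeas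
    (fun i j hij => hindep.indepFun hij) hdist (half_pos hε)
  refine tendsto_of_tendsto_of_tendsto_of_le_of_le tendsto_const_nhds hunif (fun _ => zero_le)
    fun k => measure_mono fun ω hω => ?_
  by_contra hbig
  simp only [Set.mem_ofPred_eq, not_exists, not_and, not_le] at hbig
  refine absurd ((show ε ≤ _ from hω).trans (Real.iSup_le (fun x =>
    abs_sInf_image_sub_sInf_image_le (half_pos hε).le fun u hu => ?_) (half_pos hε).le))
    (by linarith)
  rw [add_sub_add_left_eq_sub]
  exact (hbig (x, u) ⟨trivial, hΓK x hu⟩).le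

/-- Convergence in probability of the empirical Bellman operator to the true Bellman
operator, uniformly over a compact state space: under Lipschitz hypotheses on `Γ`,
`f`, and `v`, for every `ε > 0`,
`P(sup_x |Ĥᵏ(v)(x) − H(v)(x)| ≥ ε) → 0` as the sample size `k → ∞`. -/
theorem stmt9 {X X' W Ω : Type*} [MetricSpace X] [CompactSpace X] [MetricSpace X']
    [MeasurableSpace X'] [BorelSpace X'] [MeasurableSpace W]
    {mΩ : MeasurableSpace Ω} (P : Measure Ω) [IsProbabilityMeasure P]
    (μ : Measure W) [IsProbabilityMeasure μ]
    (q : ℕ)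
    (Γ : X → Set (Fin q → ℝ))
    (hΓne : ∀ x, (Γ x).Nonempty)
    (hΓcpt : ∀ x, IsCompact (Γ x))
    (K : Set (Fin q → ℝ)) (hK : IsCompact K) (hΓK : ∀ x, Γ x ⊆ K)
    (LΓ : ℝ)
    (hΓlip : ∀ x x', Metric.hausdorffDist (Γ x) (Γ x') ≤ LΓ * dist x x')
    (c : Fin q → ℝ)
    (f : X → (Fin q → ℝ) → W → X')
    (hf : ∀ (x x' : X) (u u' : Fin q → ℝ) (w : W),
      dist (f x u w) (f x' u' w) ≤ dist x x' + ‖u - u'‖)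
    (hfmeas : ∀ x u, Measurable fun w => f x u w)
    (v : X' → ℝ) (Mv Lv : ℝ)
    (hvb : ∀ y, |v y| ≤ Mv)
    (hvlip : ∀ y y', |v y - v y'| ≤ Lv * dist y y')
    (Wi : ℕ → Ω → W)
    (hWmeas : ∀ i, Measurable (Wi i))
    (hindep : ProbabilityTheory.iIndepFun Wi P)
    (hdist : ∀ i, Measure.map (Wi i) P = μ) :
    ∀ ε > (0 : ℝ), Tendsto (fun k : ℕ =>
        P {ω | ε ≤ ⨆ x : X,
          |sInf ((fun u => (∑ i, c i * u i) +
              (1 / (k : ℝ)) * ∑ i ∈ Finset.range k, v (f x u (Wi i ω))) '' Γ x) -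
            sInf ((fun u => (∑ i, c i * u i) + ∫ w, v (f x u w) ∂μ) '' Γ x)|})
      atTop (nhds 0) :=
  stmt9_general (mΩ := mΩ) P μ q Γ K hK hΓK c f hf hfmeas v Mv Lv hvb hvlip Wi hWmeas hindep hdist
end

section
/- Let T be a natural number, let X and U be compact metric spaces, let Θ be a compact metric space (the parameter space), and let W_s be compact metric spaces with finite Borel measures λ_s. Assume: (i) for each s, c̃_s : Θ → ℝ^q is continuous (so (u,θ) ↦ c̃_s(θ)·u is jointly continuous on U × Θ); (ii) β_s : W_s × Θ → [0, ∞) is continuous and bounded with ∫ β_s(w,θ) dλ_s(w) = 1 for every θ; (iii) the transition maps f_s : X × U × W_s → X are jointly continuous; (iv) Γ : X → Set U is a correspondence with nonempty compact values continuous in the Hausdorff metric. Define ṽ_{T+1} ≡ 0 and, for s = T down to 1, ṽ_s(x, θ) = inf_{u ∈ Γ(x)} ( c̃_s(θ)·u + ∫_{W_s} ṽ_{s+1}(f_s(x,u,w), θ) · β_s(w,θ) dλ_s(w) ). Then for every s ∈ {1,...,T+1}, ṽ_s is jointly continuous on X × Θ. -/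
/-!
Backward induction on `s`. If `ṽ_{s+1}` is continuous, the objective
`(x, θ, u) ↦ c̃_s(θ)·u + ∫ ṽ_{s+1}(f_s(x,u,w), θ) β_s(w,θ) dλ_s(w)`
is jointly continuous (a parametric integral of a continuous integrand over the compact
space `W_s`), and the infimum of a jointly continuous function over a Hausdorff-continuous
compact-valued correspondence is continuous (Berge's maximum theorem): uniform continuity on
the compact set `X × Θ × K` lets a minimiser for one parameter be moved to a nearby point of
the constraint set of a nearby parameter at a cost of at most `ε`.
-/

open MeasureTheory Metric TopologicalSpace

section Marginal

variable {P E : Type*} [MetricSpace P] [MetricSpace E]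

lemma sInf_image_lt_add_of_hausdorffDist_lt {s t : Set E} (hs : IsCompact s) (hsne : s.Nonempty)
    (ht : IsCompact t) (htne : t.Nonempty) {h h' : E → ℝ} (hh : Continuous h)
    (hh' : Continuous h') {δ ε : ℝ} (hst : hausdorffDist s t < δ)
    (hclose : ∀ u ∈ s, ∀ u' ∈ t, dist u u' < δ → h' u' < h u + ε) :
    sInf (h' '' t) < sInf (h '' s) + ε := by
  obtain ⟨u, hu, hmin⟩ := (hs.image hh).sInf_mem (hsne.image h)
  have hfin : hausdorffEDist s t ≠ ⊤ :=
    hausdorffEDist_ne_top_of_nonempty_of_bounded hsne htne hs.isBounded ht.isBounded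
  obtain ⟨u', hu', huu'⟩ := exists_dist_lt_of_hausdorffDist_lt hu hst hfin
  calc sInf (h' '' t) ≤ h' u' := csInf_le (ht.image hh').bddBelow (Set.mem_image_of_mem h' hu')
    _ < h u + ε := hclose u hu u' hu' huu'
    _ = sInf (h '' s) + ε := by rw [hmin]

theorem uniformContinuous_sInf_image_of_continuous_nonemptyCompacts [CompactSpace P]
    {K : Set E} (hK : IsCompact K) {Γ : P → NonemptyCompacts E}
    (hΓ : Continuous Γ) (hΓK : ∀ p, (Γ p : Set E) ⊆ K) {g : P × E → ℝ}
    (hg : Continuous g) :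
    UniformContinuous fun p => sInf ((fun u => g (p, u)) '' Γ p) := by
  have hgp : ∀ p, Continuous fun u => g (p, u) := fun p => hg.comp (Continuous.prodMk_right p)
  rw [Metric.uniformContinuous_iff]
  intro ε hε
  obtain ⟨δ₁, hδ₁, hg_unif⟩ := Metric.uniformContinuousOn_iff.mp
    ((isCompact_univ.prod hK).uniformContinuousOn_of_continuous hg.continuousOn) ε hε
  obtain ⟨δ₂, hδ₂, hΓ_unif⟩ :=
    Metric.uniformContinuous_iff.mp (CompactSpace.uniformContinuous_of_continuous hΓ) δ₁ hδ₁
  have hstep : ∀ a b : P, dist a b < min δ₁ δ₂ →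
      sInf ((fun u => g (b, u)) '' Γ b) < sInf ((fun u => g (a, u)) '' Γ a) + ε := by
    intro a b hab
    refine sInf_image_lt_add_of_hausdorffDist_lt (Γ a).isCompact (Γ a).nonempty
      (Γ b).isCompact (Γ b).nonempty (hgp a) (hgp b)
      (by simpa only [NonemptyCompacts.dist_eq] using hΓ_unif (hab.trans_le (min_le_right _ _))) ?_
    intro u hu u' hu' huu'
    have hdist : dist (a, u) (b, u') < δ₁ :=
      max_lt (hab.trans_le (min_le_left _ _)) huu'
    have := hg_unif _ ⟨Set.mem_univ a, hΓK a hu⟩ _ ⟨Set.mem_univ b, hΓK b hu'⟩ hdist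
    linarith [(abs_lt.mp (Real.dist_eq _ _ ▸ this)).1]
  refine ⟨min δ₁ δ₂, lt_min hδ₁ hδ₂, fun {a b} hab => ?_⟩
  rw [Real.dist_eq, abs_lt]
  constructor <;> linarith [hstep a b hab, hstep b a (dist_comm a b ▸ hab)]

end Marginal

theorem stmt14_general {X Θ : Type*} [MetricSpace X] [CompactSpace X]
    [MetricSpace Θ] [CompactSpace Θ]
    (q T : ℕ)
    (W : ℕ → Type) [∀ s, MetricSpace (W s)] [∀ s, CompactSpace (W s)]
    [∀ s, MeasurableSpace (W s)] [∀ s, BorelSpace (W s)]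
    (lam : ∀ s, Measure (W s)) [∀ s, IsFiniteMeasure (lam s)]
    (K : Set (Fin q → ℝ)) (hK : IsCompact K)
    (Γ : X → Set (Fin q → ℝ))
    (hΓne : ∀ x, (Γ x).Nonempty)
    (hΓcpt : ∀ x, IsCompact (Γ x))
    (hΓK : ∀ x, Γ x ⊆ K)
    (hΓcont : Continuous fun x =>
      (⟨⟨Γ x, hΓcpt x⟩, hΓne x⟩ : TopologicalSpace.NonemptyCompacts (Fin q → ℝ)))
    (ctil : ℕ → Θ → Fin q → ℝ)
    (hc : ∀ s, Continuous (ctil s))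
    (β : ∀ s, W s × Θ → ℝ)
    (hβc : ∀ s, Continuous (β s))
    (f : ∀ s, X × (Fin q → ℝ) × W s → X)
    (hf : ∀ s, Continuous (f s))
    (v : ℕ → X → Θ → ℝ)
    (hvT : ∀ x θ, v (T + 1) x θ = 0)
    (hv : ∀ s, 1 ≤ s → s ≤ T → ∀ x θ,
      v s x θ = sInf ((fun u => (∑ i, ctil s θ i * u i) +
        ∫ w, v (s + 1) (f s (x, u, w)) θ * β s (w, θ) ∂lam s) '' Γ x)) :
    ∀ s, 1 ≤ s → s ≤ T + 1 → Continuous fun p : X × Θ => v s p.1 p.2 := by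
  intro s hs1 hsT
  induction hsT using Nat.decreasingInduction with
  | self => simpa only [hvT] using continuous_const
  | of_succ s hsT ih =>
    have hnext := ih (by omega)
    have hintegrand : Continuous fun r : ((X × Θ) × (Fin q → ℝ)) × W s =>
        v (s + 1) (f s (r.1.1.1, r.1.2, r.2)) r.1.1.2 * β s (r.2, r.1.1.2) :=
      (hnext.comp (((hf s).comp (by fun_prop)).prodMk (by fun_prop))).mul
        ((hβc s).comp (by fun_prop))
    have hobjective : Continuous fun r : (X × Θ) × (Fin q → ℝ) =>
        (∑ i, ctil s r.1.2 i * r.2 i) +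
          ∫ w, v (s + 1) (f s (r.1.1, r.2, w)) r.1.2 * β s (w, r.1.2) ∂lam s := by
      refine .add (continuous_finsetSum _ fun i _ => ?_) ?_
      · exact ((continuous_apply i).comp ((hc s).comp (by fun_prop))).mul (by fun_prop)
      · simpa only [Measure.restrict_univ] using
          continuous_parametric_integral_of_continuous hintegrand isCompact_univ
    have hmarginal := (uniformContinuous_sInf_image_of_continuous_nonemptyCompacts hK
      (hΓcont.comp (continuous_fst (X := X) (Y := Θ))) (fun p => hΓK p.1) hobjective).continuous
    simp only [hv s hs1 (by omega)]
    exact hmarginal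

/-- Joint continuity (robustness) of the parameterized value functions of the
EV-charging dynamic program: under continuity of the cost vectors `c̃_s`, of the
arrival densities `β_s` (with `∫ β_s(·,θ) dλ_s = 1`), of the transition maps `f_s`,
and of the correspondence `Γ` in the Hausdorff metric, every value function
`ṽ_s`, `1 ≤ s ≤ T+1`, is jointly continuous on `X × Θ`. -/
theorem stmt14 {X Θ : Type*} [MetricSpace X] [CompactSpace X]
    [MetricSpace Θ] [CompactSpace Θ]
    (q T : ℕ)
    (W : ℕ → Type) [∀ s, MetricSpace (W s)] [∀ s, CompactSpace (W s)]
    [∀ s, MeasurableSpace (W s)] [∀ s, BorelSpace (W s)]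
    (lam : ∀ s, Measure (W s)) [∀ s, IsFiniteMeasure (lam s)]
    (K : Set (Fin q → ℝ)) (hK : IsCompact K)
    (Γ : X → Set (Fin q → ℝ))
    (hΓne : ∀ x, (Γ x).Nonempty)
    (hΓcpt : ∀ x, IsCompact (Γ x))
    (hΓK : ∀ x, Γ x ⊆ K)
    (hΓcont : Continuous fun x =>
      (⟨⟨Γ x, hΓcpt x⟩, hΓne x⟩ : TopologicalSpace.NonemptyCompacts (Fin q → ℝ)))
    (ctil : ℕ → Θ → Fin q → ℝ)
    (hc : ∀ s, Continuous (ctil s))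
    (β : ∀ s, W s × Θ → ℝ)
    (hβc : ∀ s, Continuous (β s))
    (hβ0 : ∀ s w θ, 0 ≤ β s (w, θ))
    (hβb : ∀ s, ∃ C, ∀ w θ, β s (w, θ) ≤ C)
    (hβ1 : ∀ s θ, ∫ w, β s (w, θ) ∂lam s = 1)
    (f : ∀ s, X × (Fin q → ℝ) × W s → X)
    (hf : ∀ s, Continuous (f s))
    (v : ℕ → X → Θ → ℝ)
    (hvT : ∀ x θ, v (T + 1) x θ = 0)
    (hv : ∀ s, 1 ≤ s → s ≤ T → ∀ x θ,
      v s x θ = sInf ((fun u => (∑ i, ctil s θ i * u i) +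
        ∫ w, v (s + 1) (f s (x, u, w)) θ * β s (w, θ) ∂lam s) '' Γ x)) :
    ∀ s, 1 ≤ s → s ≤ T + 1 → Continuous fun p : X × Θ => v s p.1 p.2 :=
  stmt14_general q T W lam K hK Γ hΓne hΓcpt hΓK hΓcont ctil hc β hβc f hf v hvT hv
end
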